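/- arXiv:1806.00301 — 6 statements merged into one kernel-verified Lean document; each statement's English description precedes it below -/
import Mathlib

section
/- For every positive integer k that is not a perfect square and every real number s of the form s = u + v·√k with u, v ∈ ℚ and v ≠ 0, there exists a matrix A = !![a, b; c, d] in SL(2, ℤ) with |a + d| > 2 such that a·s + b = s·(c·s + d), i.e. s is a fixed point of a hyperbolic element of SL(2, ℤ). -/
noncomputable section

abbrev SL2Z := Matrix.SpecialLinearGroup (Fin 2) ℤ

/-- The Möbius action of `A ∈ SL(2, ℤ)` on `x ∈ ℝ`. -/
def mobius (A : SL2Z) (x : ℝ) : ℝ :=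
  ((A 0 0 : ℤ) * x + (A 0 1 : ℤ)) / ((A 1 0 : ℤ) * x + (A 1 1 : ℤ))

/-- The Möbius action of `A = !![a, b; c, d]` is defined at `x` if `c·x + d ≠ 0`. -/
def mobiusDefinedAt (A : SL2Z) (x : ℝ) : Prop :=
  ((A 1 0 : ℤ) : ℝ) * x + ((A 1 1 : ℤ) : ℝ) ≠ 0

/-- `x` is a fixed point of `A = !![a, b; c, d]` if `a·x + b = x·(c·x + d)`. -/
def IsFixedPt (A : SL2Z) (x : ℝ) : Prop :=
  (A 0 0 : ℤ) * x + (A 0 1 : ℤ) = x * ((A 1 0 : ℤ) * x + (A 1 1 : ℤ))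

/-- `A` is hyperbolic if `|a + d| > 2`. -/
def IsHyperbolic (A : SL2Z) : Prop := 2 < |A 0 0 + A 1 1|

/-- `P_ℤ` is the set of real fixed points of hyperbolic elements of SL(2, ℤ). -/
def PZ : Set ℝ := {x | ∃ A : SL2Z, IsHyperbolic A ∧ IsFixedPt A x}

/-- A real number is a quadratic irrational if it is irrational and of the form
`u + v·√k` with `u, v ∈ ℚ` and `k` a positive nonsquare integer. -/
def IsQuadIrr (s : ℝ) : Prop :=
  Irrational s ∧
    ∃ (u v : ℚ) (k : ℕ), 0 < k ∧ ¬ IsSquare k ∧ s = (u : ℝ) + (v : ℝ) * Real.sqrt k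

/-! A real `s = u + v√k` is a root of an integer quadratic `a s² + b s + c = 0` whose discriminant
is `k` times a nonzero square, hence positive and not a square. For a nontrivial solution of
Pell's equation `x² - (b² - 4ac) y² = 1` the matrix `!![x - b y, -2 c y; 2 a y, x + b y]` has
determinant one and trace `2x`, with `|x| ≥ 2`, and it fixes exactly the roots of that quadratic. -/

theorem not_isSquare_sq_mul {e k : ℤ} (he : e ≠ 0) (hk : ¬IsSquare k) :
    ¬IsSquare (e ^ 2 * k) := by
  rw [← Rat.isSquare_intCast_iff] at hk ⊢
  intro h
  have hk' : (k : ℚ) = ((e ^ 2 * k : ℤ) : ℚ) / (e : ℚ) ^ 2 := by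
    push_cast
    field_simp
  exact hk (hk' ▸ h.div (IsSquare.sq _))

section PellMatrix

variable {a b c x y : ℤ}

-- The fixed-point equation of `!![α, β; γ, δ]` is `γ s² + (δ - α) s - β = 0`.
def pellMatrix (a b c x y : ℤ) (h : x ^ 2 - discrim a b c * y ^ 2 = 1) : SL2Z :=
  ⟨!![x - b * y, -2 * c * y; 2 * a * y, x + b * y], by
    rw [Matrix.det_fin_two_of, ← h, discrim]
    ring⟩

theorem isFixedPt_pellMatrix (h : x ^ 2 - discrim a b c * y ^ 2 = 1) {s : ℝ}
    (hs : a * (s * s) + b * s + c = 0) : IsFixedPt (pellMatrix a b c x y h) s := by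
  simp only [IsFixedPt, pellMatrix, Matrix.SpecialLinearGroup.coe_mk, Matrix.of_apply,
    Matrix.cons_val', Matrix.cons_val_zero, Matrix.cons_val_one, Matrix.empty_val',
    Matrix.cons_val_fin_one]
  push_cast
  linear_combination (-2 * (y : ℝ)) * hs

theorem isHyperbolic_pellMatrix (h : x ^ 2 - discrim a b c * y ^ 2 = 1)
    (hD : 0 < discrim a b c) (hy : y ≠ 0) : IsHyperbolic (pellMatrix a b c x y h) := by
  have hx : 1 < |x| := by
    have : 0 < discrim a b c * y ^ 2 := by positivity
    rw [← one_lt_sq_iff_one_lt_abs]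
    linarith
  show 2 < |x - b * y + (x + b * y)|
  rw [show x - b * y + (x + b * y) = 2 * x by ring, abs_mul, abs_two]
  linarith

end PellMatrix

theorem mem_PZ_of_quadratic {a b c : ℤ} (hD : 0 < discrim a b c) (hsq : ¬IsSquare (discrim a b c))
    {s : ℝ} (hs : a * (s * s) + b * s + c = 0) : s ∈ PZ := by
  obtain ⟨x, y, h, hy⟩ := Pell.exists_of_not_isSquare hD hsq
  exact ⟨pellMatrix a b c x y h, isHyperbolic_pellMatrix h hD hy, isFixedPt_pellMatrix h hs⟩

theorem mem_PZ_of_int_mul_eq_add_mul_sqrt {N p q : ℤ} {k : ℕ} (hN : N ≠ 0) (hq : q ≠ 0)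
    (hk : ¬IsSquare k) {s : ℝ} (hs : N * s = p + q * √k) : s ∈ PZ := by
  have hdiscrim : discrim (N ^ 2) (-2 * N * p) (p ^ 2 - q ^ 2 * k) = (2 * N * q) ^ 2 * k := by
    rw [discrim]
    ring
  have hk0 : 0 < k := Nat.pos_of_ne_zero (by rintro rfl; exact hk ⟨0, rfl⟩)
  refine mem_PZ_of_quadratic (hdiscrim ▸ by positivity)
    (hdiscrim ▸ not_isSquare_sq_mul (by positivity) (Int.isSquare_natCast_iff.not.mpr hk)) ?_
  have hsqrt : √(k : ℝ) ^ 2 = k := Real.sq_sqrt k.cast_nonneg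
  push_cast
  linear_combination (N * s - p + q * √k) * hs + (q : ℝ) ^ 2 * hsqrt

theorem quad_irrational_is_fixed_point_of_hyperbolic_general
    (k : ℕ) (hksq : ¬ IsSquare k)
    (u v : ℚ) (hv : v ≠ 0) (s : ℝ) (hs : s = (u : ℝ) + (v : ℝ) * Real.sqrt k) :
    ∃ A : SL2Z, IsHyperbolic A ∧ IsFixedPt A s := by
  have hu_den : (u : ℝ) * u.den = u.num := by exact_mod_cast Rat.mul_den_eq_num u
  have hv_den : (v : ℝ) * v.den = v.num := by exact_mod_cast Rat.mul_den_eq_num v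
  refine mem_PZ_of_int_mul_eq_add_mul_sqrt (N := u.den * v.den) (p := u.num * v.den)
    (q := v.num * u.den) (by positivity) (mul_ne_zero (Rat.num_ne_zero.2 hv) (by positivity))
    hksq ?_
  rw [hs]
  push_cast
  linear_combination (v.den : ℝ) * hu_den + (u.den : ℝ) * √k * hv_den

/-- Every real number of the form `u + v·√k` (`u, v ∈ ℚ`, `v ≠ 0`, `k` a positive
nonsquare integer) is a fixed point of a hyperbolic element of SL(2, ℤ). -/
theorem quad_irrational_is_fixed_point_of_hyperbolic
    (k : ℕ) (hk : 0 < k) (hksq : ¬ IsSquare k)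
    (u v : ℚ) (hv : v ≠ 0) (s : ℝ) (hs : s = (u : ℝ) + (v : ℝ) * Real.sqrt k) :
    ∃ A : SL2Z, IsHyperbolic A ∧ IsFixedPt A s :=
  quad_irrational_is_fixed_point_of_hyperbolic_general k hksq u v hv s hs

end
end

section
/- A real number s is a fixed point of some hyperbolic element of SL(2, ℤ) if and only if s is a quadratic irrational. Moreover, every real fixed point of a parabolic element of SL(2, ℤ) is rational. -/
noncomputable section

/-!
A fixed point of `!![a, b; c, d]` is a root of `c x² + (d - a) x - b`, whose discriminant is
`(a + d)² - 4`. For `|a + d| > 2` this lies strictly between `(|a + d| - 1)²` and `(a + d)²`, so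
it is a positive nonsquare and the root is a quadratic irrational; for `|a + d| = 2` it vanishes
and the root is rational, unless `c = 0`, which forces `A = ±1`. Conversely, a quadratic
irrational is a root of some `a x² + b x + c` with positive nonsquare discriminant `D`, and a
nontrivial solution of Pell's equation `X² - D y² = 1` gives the hyperbolic matrix
`!![X - b y, -2 c y; 2 a y, X + b y]` fixing it.
-/

theorem Int.not_isSquare_sq_sub {t k : ℤ} (hk : 0 < k) (hkt : k < 2 * |t| - 1) :
    ¬IsSquare (t ^ 2 - k) := by
  rintro ⟨m, hm⟩
  have hlt : |m| < |t| := sq_lt_sq.mp (by nlinarith)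
  have hgt : |t| - 1 < |m| := by
    rw [← abs_of_nonneg (by omega : 0 ≤ |t| - 1)]
    exact sq_lt_sq.mp (by nlinarith [sq_abs t])
  omega

@[simp, norm_cast]
theorem Int.cast_discrim {R : Type*} [Ring R] (a b c : ℤ) :
    ((discrim a b c : ℤ) : R) = discrim (a : R) b c := by
  simp [discrim]

section Quadratic

variable {a b c : ℤ} {x : ℝ}

theorem isQuadIrr_of_quadratic_eq_zero (ha : a ≠ 0) (hx : a * (x * x) + b * x + c = 0)
    (hpos : 0 < discrim a b c) (hsq : ¬IsSquare (discrim a b c)) : IsQuadIrr x := by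
  obtain ⟨k, hk⟩ := Int.eq_ofNat_of_zero_le hpos.le
  rw [hk, Int.isSquare_natCast_iff] at hsq
  have hdisc : discrim (a : ℝ) b c = √k * √k := by
    rw [← Int.cast_discrim, hk, Real.mul_self_sqrt k.cast_nonneg, Int.cast_natCast]
  have ha' : (a : ℝ) ≠ 0 := by exact_mod_cast ha
  obtain ⟨v, hv, hxv⟩ : ∃ v : ℚ, v ≠ 0 ∧ x = ((-b / (2 * a) : ℚ) : ℝ) + v * √k := by
    rcases (quadratic_eq_zero_iff ha' hdisc x).mp hx with h | h
    · exact ⟨1 / (2 * a), by simpa using ha, by rw [h]; push_cast; ring⟩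
    · exact ⟨-1 / (2 * a), by simpa using ha, by rw [h]; push_cast; ring⟩
  refine ⟨?_, _, v, k, by omega, hsq, hxv⟩
  rw [hxv]
  exact ((irrational_sqrt_natCast_iff.mpr hsq).ratCast_mul hv).ratCast_add _

theorem discrim_pos_and_not_isSquare_of_irrational (ha : a ≠ 0)
    (hx : a * (x * x) + b * x + c = 0) (hirr : Irrational x) :
    0 < discrim a b c ∧ ¬IsSquare (discrim a b c) := by
  have hsq : ¬IsSquare (discrim a b c) := by
    rintro ⟨m, hm⟩
    have hdisc : discrim (a : ℝ) b c = m * m := by rw [← Int.cast_discrim, hm, Int.cast_mul]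
    rcases (quadratic_eq_zero_iff (by exact_mod_cast ha) hdisc x).mp hx with h | h
    · exact hirr ⟨(-b + m) / (2 * a), by rw [h]; push_cast; ring⟩
    · exact hirr ⟨(-b - m) / (2 * a), by rw [h]; push_cast; ring⟩
  have hnonneg : (0 : ℝ) ≤ discrim (a : ℝ) b c := by
    rw [discrim_eq_sq_of_quadratic_eq_zero hx]
    positivity
  refine ⟨lt_of_le_of_ne (by exact_mod_cast hnonneg) fun h => hsq ?_, hsq⟩
  rw [← h]
  exact ⟨0, rfl⟩

theorem IsQuadIrr.exists_quadratic_eq_zero (hx : IsQuadIrr x) :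
    ∃ a b c : ℤ, a ≠ 0 ∧ a * (x * x) + b * x + c = 0 := by
  obtain ⟨-, u, v, k, -, -, rfl⟩ := hx
  set q : ℚ := -2 * u
  set r : ℚ := u ^ 2 - v ^ 2 * k
  have hqr : (u + v * √k : ℝ) * (u + v * √k) + q * (u + v * √k) + r = 0 := by
    simp only [q, r]
    push_cast
    linear_combination (v : ℝ) ^ 2 * Real.mul_self_sqrt k.cast_nonneg
  have hq : (q.num : ℝ) = q * q.den := by exact_mod_cast (Rat.mul_den_eq_num q).symm
  have hr : (r.num : ℝ) = r * r.den := by exact_mod_cast (Rat.mul_den_eq_num r).symm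
  refine ⟨q.den * r.den, q.num * r.den, r.num * q.den, by positivity, ?_⟩
  push_cast
  rw [hq, hr]
  linear_combination (q.den * r.den : ℝ) * hqr

theorem exists_isHyperbolic_isFixedPt_of_quadratic_eq_zero
    (hx : a * (x * x) + b * x + c = 0) (hpos : 0 < discrim a b c)
    (hsq : ¬IsSquare (discrim a b c)) : ∃ A : SL2Z, IsHyperbolic A ∧ IsFixedPt A x := by
  obtain ⟨X, y, hpell, hy⟩ := Pell.exists_of_not_isSquare hpos hsq
  let A : SL2Z := ⟨!![X - y * b, -(2 * y * c); 2 * y * a, X + y * b], by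
    rw [Matrix.det_fin_two_of, ← hpell, discrim]
    ring⟩
  refine ⟨A, ?_, ?_⟩
  · have hX : 1 < |X| := by
      rw [← one_lt_sq_iff_one_lt_abs, ← hpell]
      have : 0 < discrim a b c * y ^ 2 := mul_pos hpos (by positivity)
      linarith
    show 2 < |X - y * b + (X + y * b)|
    rw [show X - y * b + (X + y * b) = 2 * X by ring, abs_mul, abs_two]
    linarith
  · show ((X - y * b : ℤ) : ℝ) * x + ((-(2 * y * c) : ℤ) : ℝ)
      = x * (((2 * y * a : ℤ) : ℝ) * x + ((X + y * b : ℤ) : ℝ))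
    push_cast
    linear_combination (-2 * y : ℝ) * hx

end Quadratic

theorem Matrix.SpecialLinearGroup.discrim_fixedPoint_eq {R : Type*} [CommRing R]
    (A : SpecialLinearGroup (Fin 2) R) :
    discrim (A 1 0) (A 1 1 - A 0 0) (-A 0 1) = (A 0 0 + A 1 1) ^ 2 - 4 := by
  have hdet := A.det_coe
  rw [Matrix.det_fin_two] at hdet
  rw [discrim]
  linear_combination (-4 : R) * hdet

theorem Matrix.SpecialLinearGroup.diag_eq_one_or_neg_one_of_apply_one_zero_eq_zero
    {A : SpecialLinearGroup (Fin 2) ℤ} (hc : A 1 0 = 0) :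
    A 1 1 = A 0 0 ∧ (A 0 0 = 1 ∨ A 0 0 = -1) := by
  have hdet := A.det_coe
  rw [Matrix.det_fin_two, hc, mul_zero, sub_zero] at hdet
  rcases Int.eq_one_or_neg_one_of_mul_eq_one' hdet with ⟨ha, hd⟩ | ⟨ha, hd⟩ <;> omega

namespace IsFixedPt

variable {A : SL2Z} {s : ℝ}

theorem quadratic_eq_zero (hs : IsFixedPt A s) :
    ((A 1 0 : ℤ) : ℝ) * (s * s) + ((A 1 1 - A 0 0 : ℤ) : ℝ) * s + ((-A 0 1 : ℤ) : ℝ) = 0 := by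
  unfold IsFixedPt at hs
  push_cast
  linear_combination -hs

theorem eq_one_or_eq_neg_one_of_apply_one_zero_eq_zero (hs : IsFixedPt A s) (hc : A 1 0 = 0) :
    A = 1 ∨ (A : Matrix (Fin 2) (Fin 2) ℤ) = -1 := by
  obtain ⟨hd, ha⟩ := Matrix.SpecialLinearGroup.diag_eq_one_or_neg_one_of_apply_one_zero_eq_zero hc
  have hb : A 0 1 = 0 := by
    have := hs.quadratic_eq_zero
    rw [hc, hd, sub_self] at this
    simpa using this
  rcases ha with ha | ha
  · left
    ext i j
    fin_cases i <;> fin_cases j <;> simp [ha, hb, hc, hd]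
  · right
    ext i j
    fin_cases i <;> fin_cases j <;> simp [ha, hb, hc, hd]

end IsFixedPt

theorem IsHyperbolic.apply_one_zero_ne_zero {A : SL2Z} (hA : IsHyperbolic A) : A 1 0 ≠ 0 := by
  intro hc
  obtain ⟨hd, ha⟩ := Matrix.SpecialLinearGroup.diag_eq_one_or_neg_one_of_apply_one_zero_eq_zero hc
  unfold IsHyperbolic at hA
  rcases ha with ha | ha <;> rw [hd, ha] at hA <;> norm_num at hA

theorem IsHyperbolic.isQuadIrr_of_isFixedPt {A : SL2Z} {s : ℝ} (hA : IsHyperbolic A)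
    (hs : IsFixedPt A s) : IsQuadIrr s := by
  have htr : 2 < |A 0 0 + A 1 1| := hA
  have hdisc := A.discrim_fixedPoint_eq
  refine isQuadIrr_of_quadratic_eq_zero hA.apply_one_zero_ne_zero hs.quadratic_eq_zero ?_ ?_
  · rw [hdisc, sub_pos, ← sq_abs]
    nlinarith
  · rw [hdisc]
    exact Int.not_isSquare_sq_sub (by norm_num) (by omega)

theorem IsQuadIrr.exists_isHyperbolic_isFixedPt {s : ℝ} (hs : IsQuadIrr s) :
    ∃ A : SL2Z, IsHyperbolic A ∧ IsFixedPt A s := by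
  obtain ⟨a, b, c, ha, hx⟩ := hs.exists_quadratic_eq_zero
  obtain ⟨hpos, hsq⟩ := discrim_pos_and_not_isSquare_of_irrational ha hx hs.1
  exact exists_isHyperbolic_isFixedPt_of_quadratic_eq_zero hx hpos hsq

theorem IsFixedPt.exists_rat_eq_of_abs_trace_eq_two {A : SL2Z} {s : ℝ}
    (hs : IsFixedPt A s) (htr : |A 0 0 + A 1 1| = 2) (h1 : A ≠ 1)
    (h2 : (A : Matrix (Fin 2) (Fin 2) ℤ) ≠ -1) : ∃ q : ℚ, s = q := by
  have hc : A 1 0 ≠ 0 := fun hc =>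
    (hs.eq_one_or_eq_neg_one_of_apply_one_zero_eq_zero hc).elim h1 h2
  have hdisc : discrim (A 1 0 : ℝ) ((A 1 1 - A 0 0 : ℤ) : ℝ) ((-A 0 1 : ℤ) : ℝ) = 0 := by
    rw [← Int.cast_discrim, A.discrim_fixedPoint_eq, ← sq_abs, htr]
    norm_num
  have hroot := (quadratic_eq_zero_iff_of_discrim_eq_zero (by exact_mod_cast hc) hdisc s).mp
    hs.quadratic_eq_zero
  exact ⟨(A 0 0 - A 1 1) / (2 * A 1 0), by rw [hroot]; push_cast; ring⟩

/-- A real number is a fixed point of some hyperbolic element of SL(2, ℤ) if and only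
if it is a quadratic irrational; moreover every real fixed point of a parabolic element
of SL(2, ℤ) (trace of absolute value 2, `A ≠ ±1`) is rational. -/
theorem fixedPoint_hyperbolic_iff_quadIrr_and_parabolic_fixedPoints_rational :
    (∀ s : ℝ, (∃ A : SL2Z, IsHyperbolic A ∧ IsFixedPt A s) ↔ IsQuadIrr s) ∧
    (∀ (A : SL2Z) (s : ℝ), |A 0 0 + A 1 1| = 2 → A ≠ 1 →
      (A : Matrix (Fin 2) (Fin 2) ℤ) ≠ -1 → IsFixedPt A s → ∃ q : ℚ, s = (q : ℝ)) :=
  ⟨fun _ => ⟨fun ⟨_, hA, hs⟩ => hA.isQuadIrr_of_isFixedPt hs,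
      IsQuadIrr.exists_isHyperbolic_isFixedPt⟩,
    fun _ _ htr h1 h2 hs => hs.exists_rat_eq_of_abs_trace_eq_two htr h1 h2⟩

end
end

section
/- If s is a quadratic irrational, say s = u + v·√k with u, v ∈ ℚ, v ≠ 0 and k a positive nonsquare integer, and A ∈ SL(2, ℤ) with A ≠ 1 and A ≠ -1 has s as a fixed point, then A is hyperbolic (|tr A| > 2) and A also has the Galois conjugate s̄ = u − v·√k as a fixed point. -/
/-!
A fixed point `x` of `A = !![a, b; c, d]` is a root of `c x² + (d - a) x - b`, whose discriminant
is `(a + d)² - 4` because `ad - bc = 1`. If `x` is irrational then `c ≠ 0` (otherwise `A = ±1`),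
and the discriminant equals `(2 c x + d - a)²` with `2 c x + d - a` irrational, hence nonzero; so
`A` is hyperbolic. The conjugate `u - v√k` is a root as well: the polynomial has rational
coefficients, so its value at `u ± v√k` is `P ± Q√k` with `P, Q ∈ ℚ`, and `P + Q√k = 0` forces
`P = Q = 0` since `√k` is irrational.
-/

noncomputable section

lemma SL2Z.det_eq_one (A : SL2Z) : A 0 0 * A 1 1 - A 0 1 * A 1 0 = 1 := by
  rw [← Matrix.det_fin_two, A.det_coe]

lemma Irrational.eq_zero_of_rat_add_rat_mul_eq_zero {r : ℝ} (hr : Irrational r) {p q : ℚ}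
    (h : (p : ℝ) + q * r = 0) : p = 0 ∧ q = 0 := by
  obtain rfl : q = 0 := by
    by_contra hq
    exact ((hr.ratCast_mul hq).ratCast_add p).ne_zero h
  exact ⟨by exact_mod_cast (by simpa using h : (p : ℝ) = 0), rfl⟩

lemma Irrational.quadratic_eq_zero_conj {r : ℝ} (hr : Irrational r) {k : ℚ} (hrk : r * r = k)
    {α β γ u v : ℚ} (h : α * ((u + v * r) * (u + v * r)) + β * (u + v * r) + γ = 0) :
    α * ((u - v * r) * (u - v * r)) + β * (u - v * r) + γ = 0 := by
  obtain ⟨hP, hQ⟩ := hr.eq_zero_of_rat_add_rat_mul_eq_zero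
    (p := α * (u * u + v * v * k) + β * u + γ) (q := 2 * α * u * v + β * v)
    (by push_cast; linear_combination h - α * v * v * hrk)
  have hP' : (α : ℝ) * (u * u + v * v * k) + β * u + γ = 0 := by exact_mod_cast hP
  have hQ' : (2 * α * u * v + β * v : ℝ) = 0 := by exact_mod_cast hQ
  linear_combination hP' - r * hQ' + α * v * v * hrk

lemma isFixedPt_iff {A : SL2Z} {x : ℝ} :
    IsFixedPt A x ↔
      ((A 1 0 : ℤ) : ℝ) * (x * x) + ((A 1 1 - A 0 0 : ℤ) : ℝ) * x + ((-A 0 1 : ℤ) : ℝ) = 0 := by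
  unfold IsFixedPt
  push_cast
  constructor <;> intro h <;> linear_combination -h

lemma discrim_isFixedPt_eq (A : SL2Z) :
    discrim ((A 1 0 : ℤ) : ℝ) ((A 1 1 - A 0 0 : ℤ) : ℝ) ((-A 0 1 : ℤ) : ℝ) =
      ((A 0 0 + A 1 1 : ℤ) : ℝ) ^ 2 - 4 := by
  have hdet : ((A 0 0 * A 1 1 - A 0 1 * A 1 0 : ℤ) : ℝ) = 1 := by exact_mod_cast A.det_eq_one
  rw [discrim]
  push_cast at hdet ⊢
  linear_combination -4 * hdet

lemma IsFixedPt.apply_one_zero_ne_zero {A : SL2Z} {x : ℝ} (hx : IsFixedPt A x)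
    (hirr : Irrational x) (h1 : A ≠ 1) (h2 : (A : Matrix (Fin 2) (Fin 2) ℤ) ≠ -1) : A 1 0 ≠ 0 := by
  intro hc
  obtain ⟨hb, had⟩ := hirr.eq_zero_of_rat_add_rat_mul_eq_zero
    (p := ((A 0 1 : ℤ) : ℚ)) (q := ((A 0 0 - A 1 1 : ℤ) : ℚ))
    (by unfold IsFixedPt at hx; rw [hc] at hx; push_cast at hx ⊢; linear_combination hx)
  replace hb : A 0 1 = 0 := by exact_mod_cast hb
  replace had : A 0 0 = A 1 1 := by rw [← sub_eq_zero]; exact_mod_cast had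
  have hdd : A 1 1 * A 1 1 = 1 := by simpa [had, hb] using A.det_eq_one
  rcases Int.eq_one_or_neg_one_of_mul_eq_one hdd with hd | hd
  · refine h1 (Subtype.ext (Matrix.ext fun i j => ?_))
    fin_cases i <;> fin_cases j <;> simp [had, hb, hc, hd]
  · refine h2 (Matrix.ext fun i j => ?_)
    fin_cases i <;> fin_cases j <;> simp [had, hb, hc, hd]

lemma IsFixedPt.isHyperbolic {A : SL2Z} {x : ℝ} (hx : IsFixedPt A x) (hirr : Irrational x)
    (h1 : A ≠ 1) (h2 : (A : Matrix (Fin 2) (Fin 2) ℤ) ≠ -1) : IsHyperbolic A := by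
  have hc : 2 * A 1 0 ≠ 0 := mul_ne_zero two_ne_zero (hx.apply_one_zero_ne_zero hirr h1 h2)
  have hne : ((2 * A 1 0 : ℤ) : ℝ) * x + ((A 1 1 - A 0 0 : ℤ) : ℝ) ≠ 0 :=
    ((hirr.intCast_mul hc).add_intCast _).ne_zero
  have hdisc := discrim_eq_sq_of_quadratic_eq_zero (isFixedPt_iff.mp hx)
  rw [discrim_isFixedPt_eq] at hdisc
  have h4 : (2 : ℤ) ^ 2 < (A 0 0 + A 1 1) ^ 2 := by
    have : (2 : ℝ) ^ 2 < ((A 0 0 + A 1 1 : ℤ) : ℝ) ^ 2 := by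
      push_cast at hne hdisc ⊢
      linarith [sq_pos_of_ne_zero hne]
    exact_mod_cast this
  simpa [IsHyperbolic] using sq_lt_sq.mp h4

lemma IsFixedPt.sub_mul_sqrt {A : SL2Z} {k : ℕ} (hk : ¬ IsSquare k) {u v : ℚ}
    (h : IsFixedPt A (u + v * √k)) : IsFixedPt A (u - v * √k) := by
  rw [isFixedPt_iff] at h ⊢
  have := (irrational_sqrt_natCast_iff.mpr hk).quadratic_eq_zero_conj (k := k)
    (by push_cast; exact Real.mul_self_sqrt k.cast_nonneg)
    (α := A 1 0) (β := A 1 1 - A 0 0) (γ := -A 0 1) (u := u) (v := v) (by exact_mod_cast h)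
  exact_mod_cast this

theorem sl2z_fixing_quadIrr_is_hyperbolic_and_fixes_conjugate_general
    (k : ℕ) (hksq : ¬ IsSquare k)
    (u v : ℚ) (s : ℝ) (hs : s = (u : ℝ) + (v : ℝ) * Real.sqrt k)
    (hirr : Irrational s)
    (A : SL2Z) (hA1 : A ≠ 1) (hA2 : (A : Matrix (Fin 2) (Fin 2) ℤ) ≠ -1)
    (hfix : IsFixedPt A s) :
    IsHyperbolic A ∧ IsFixedPt A ((u : ℝ) - (v : ℝ) * Real.sqrt k) :=
  ⟨hfix.isHyperbolic hirr hA1 hA2, (hs ▸ hfix).sub_mul_sqrt hksq⟩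

/-- If `A ∈ SL(2, ℤ)` with `A ≠ 1` and `A ≠ -1` has the quadratic irrational
`s = u + v·√k` as a fixed point, then `A` is hyperbolic and also has the Galois
conjugate `u − v·√k` as a fixed point. -/
theorem sl2z_fixing_quadIrr_is_hyperbolic_and_fixes_conjugate
    (k : ℕ) (hk : 0 < k) (hksq : ¬ IsSquare k)
    (u v : ℚ) (hv : v ≠ 0) (s : ℝ) (hs : s = (u : ℝ) + (v : ℝ) * Real.sqrt k)
    (hirr : Irrational s)
    (A : SL2Z) (hA1 : A ≠ 1) (hA2 : (A : Matrix (Fin 2) (Fin 2) ℤ) ≠ -1)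
    (hfix : IsFixedPt A s) :
    IsHyperbolic A ∧ IsFixedPt A ((u : ℝ) - (v : ℝ) * Real.sqrt k) :=
  sl2z_fixing_quadIrr_is_hyperbolic_and_fixes_conjugate_general k hksq u v s hs hirr A hA1 hA2 hfix

end
end

section
/- Let H be a subgroup of G̃ generated by a finite set S, let s ∈ ℝ, and let O = {h(s) : h ∈ H} be the orbit of s. Then the Schreier graph of H on O with respect to S is amenable: for every ε > 0 there exists a finite nonempty subset F ⊆ O such that the boundary ∂F = {y ∈ O ∖ F : there exists h ∈ S with h(y) ∈ F or h⁻¹(y) ∈ F} satisfies card(∂F) ≤ ε · card(F). -/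
noncomputable section

/-- `f` coincides on `S` with the (everywhere-defined) Möbius action of a single
element of SL(2, ℤ). -/
def MobiusLikeOn (f : ℝ → ℝ) (S : Set ℝ) : Prop :=
  ∃ A : SL2Z, ∀ y ∈ S, mobiusDefinedAt A y ∧ f y = mobius A y

/-- Membership in the group `G̃` of piecewise-`PSL₂(ℤ)` homeomorphisms of the line:
a strictly increasing bijection of `ℝ` which, off a finite set `B`, coincides on each
connected component of `ℝ ∖ B` with the Möbius action of an element of SL(2, ℤ),
and which equals an integer translation near infinity. -/
def InGTilde (f : Equiv.Perm ℝ) : Prop :=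
  StrictMono f ∧
  (∃ B : Finset ℝ, ∀ x : ℝ, x ∉ B →
    MobiusLikeOn f (connectedComponentIn ((↑B : Set ℝ)ᶜ) x)) ∧
  ∃ (n : ℤ) (M : ℝ), ∀ x : ℝ, M ≤ |x| → f x = x + (n : ℝ)

/-- `x` is a break point of `f` if `f` does not coincide with the Möbius action of a
single element of SL(2, ℤ) on any neighbourhood of `x`. -/
def IsBreakPt (f : ℝ → ℝ) (x : ℝ) : Prop :=
  ¬ ∃ U ∈ nhds x, MobiusLikeOn f U

/-- Membership in Monod's group `H(ℤ)`: an element of `G̃` all of whose break points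
lie in `P_ℤ`. -/
def InHZ (f : Equiv.Perm ℝ) : Prop :=
  InGTilde f ∧ ∀ x : ℝ, IsBreakPt f x → x ∈ PZ

/-- The orbit of `s` under the Möbius action of SL(2, ℤ) (where defined). -/
def orbitOf (s : ℝ) : Set ℝ :=
  {x | ∃ A : SL2Z, mobiusDefinedAt A s ∧ x = mobius A s}

/-!
If the orbit `O` is unbounded above, every generator is a translation `x ↦ x + n` near `+∞`.
If `O` is bounded above, `σ = sup O` is fixed by every generator; either `σ ∈ O`, and `{σ}` is
an invariant set, or `O` accumulates at `σ` from the left, where every generator is the germ of a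
Möbius map fixing `σ`. In the coordinate `u = 1/(σ - y)` these germs are the affine maps
`u ↦ μ² u - c μ` (`μ = cσ + d`). Either they are all translations, or `σ` is irrational, all of
them share the fixed point `z` of one of them, and `log (u - z)` turns them into translations.

So in every case the generators act near an end of `O` as translations `y ↦ y + t h` in a
coordinate `ψ`. Far out in that end, the points `y` with `ψ y - ψ y₀` in the box
`{∑ c_h t_h : |c_h| ≤ K}` form a Følner set for a suitable `K`: moving by one generator stays in
the box of size `K + 1`, and since the number of values in the box grows polynomially in `K`,
some step `K → K + 1` increases it by a factor at most `1 + ε`.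
-/

open Filter Topology Set

section Folner

variable {α : Type*}

def schreierBoundary (S : Finset (Equiv.Perm α)) (O F : Set α) : Set α :=
  {y | y ∈ O \ F ∧ ∃ h ∈ S, h y ∈ F ∨ h⁻¹ y ∈ F}

def HasFolnerSets (S : Finset (Equiv.Perm α)) (O : Set α) : Prop :=
  ∀ ε : ℝ, 0 < ε → ∃ F : Set α, F.Finite ∧ F.Nonempty ∧ F ⊆ O ∧
    ((schreierBoundary S O F).ncard : ℝ) ≤ ε * F.ncard

def IsInvariantUnder (S : Finset (Equiv.Perm α)) (O : Set α) : Prop :=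
  ∀ h ∈ S, MapsTo h O O ∧ MapsTo ⇑h⁻¹ O O

theorem isInvariantUnder_orbit (S : Finset (Equiv.Perm α)) (s : α) :
    IsInvariantUnder S {x | ∃ h ∈ Subgroup.closure (S : Set (Equiv.Perm α)), h s = x} := by
  intro h hh
  have hh' := Subgroup.subset_closure hh
  constructor <;> rintro - ⟨g, hg, rfl⟩
  exacts [⟨h * g, mul_mem hh' hg, rfl⟩, ⟨h⁻¹ * g, mul_mem (inv_mem hh') hg, rfl⟩]

theorem HasFolnerSets.of_common_fixedPoint {S : Finset (Equiv.Perm α)} {O : Set α} {σ : α}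
    (hσO : σ ∈ O) (hfix : ∀ h ∈ S, h σ = σ) : HasFolnerSets S O := by
  intro ε hε
  refine ⟨{σ}, finite_singleton σ, singleton_nonempty σ, singleton_subset_iff.2 hσO, ?_⟩
  have : schreierBoundary S O {σ} = ∅ := by
    refine eq_empty_of_forall_notMem ?_
    rintro y ⟨⟨-, hyσ⟩, h, hh, hy | hy⟩ <;> rw [mem_singleton_iff] at hy hyσ
    · exact hyσ (h.injective (hy.trans (hfix h hh).symm))
    · exact hyσ ((Equiv.Perm.inv_eq_iff_eq.1 hy).trans (hfix h hh))
  rw [this, ncard_empty, Nat.cast_zero]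
  positivity

end Folner

section LatticeBox

variable {ι : Type*} [Fintype ι] [DecidableEq ι] (t : ι → ℝ)

def latticeBox (K : ℕ) : Finset ℝ :=
  (Fintype.piFinset fun _ : ι => Finset.Icc (-(K : ℤ)) K).image fun c => ∑ i, (c i : ℝ) * t i

theorem mem_latticeBox {K : ℕ} {v : ℝ} :
    v ∈ latticeBox t K ↔ ∃ c : ι → ℤ, (∀ i, |c i| ≤ K) ∧ ∑ i, (c i : ℝ) * t i = v := by
  simp [latticeBox, abs_le]

theorem zero_mem_latticeBox (K : ℕ) : 0 ∈ latticeBox t K :=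
  (mem_latticeBox t).2 ⟨0, by simp, by simp⟩

theorem latticeBox_mono {K K' : ℕ} (hK : K ≤ K') : latticeBox t K ⊆ latticeBox t K' := by
  intro v hv
  obtain ⟨c, hc, rfl⟩ := (mem_latticeBox t).1 hv
  exact (mem_latticeBox t).2 ⟨c, fun i => (hc i).trans (by exact_mod_cast hK), rfl⟩

theorem card_latticeBox_le (K : ℕ) :
    (latticeBox t K).card ≤ (2 * K + 1) ^ Fintype.card ι := by
  refine Finset.card_image_le.trans ?_
  rw [Fintype.card_piFinset, Finset.prod_const, Finset.card_univ, Int.card_Icc]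
  exact Nat.pow_le_pow_left (by omega) _

theorem abs_le_of_mem_latticeBox {K : ℕ} {v : ℝ} (hv : v ∈ latticeBox t K) :
    |v| ≤ K * ∑ i, |t i| := by
  obtain ⟨c, hc, rfl⟩ := (mem_latticeBox t).1 hv
  rw [Finset.mul_sum]
  refine (Finset.abs_sum_le_sum_abs _ _).trans (Finset.sum_le_sum fun i _ => ?_)
  rw [abs_mul]
  exact mul_le_mul_of_nonneg_right (by exact_mod_cast hc i) (abs_nonneg _)

theorem add_mul_mem_latticeBox_succ {K : ℕ} {v : ℝ} (hv : v ∈ latticeBox t K) (i : ι) {e : ℤ}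
    (he : |e| ≤ 1) : v + e * t i ∈ latticeBox t (K + 1) := by
  obtain ⟨c, hc, rfl⟩ := (mem_latticeBox t).1 hv
  refine (mem_latticeBox t).2 ⟨c + Pi.single i e, fun j => ?_, ?_⟩
  · have hj : |(Pi.single i e : ι → ℤ) j| ≤ 1 := by
      rcases eq_or_ne j i with rfl | hji <;> simp [*]
    calc |(c + Pi.single i e : ι → ℤ) j| ≤ |c j| + |(Pi.single i e : ι → ℤ) j| := abs_add_le _ _
      _ ≤ K + 1 := by linarith [hc j]
  · simp [add_mul, Finset.sum_add_distrib, Pi.single_apply]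

theorem exists_succ_le_mul_of_le_pow {f : ℕ → ℕ} {m : ℕ} (hf0 : 0 < f 0)
    (hf : ∀ K, f K ≤ (2 * K + 1) ^ m) {ε : ℝ} (hε : 0 < ε) :
    ∃ K, (f (K + 1) : ℝ) ≤ (1 + ε) * f K := by
  by_contra! hgrow
  have hexp : ∀ K, (1 + ε) ^ K ≤ (f K : ℝ) := by
    intro K
    induction K with
    | zero => rw [pow_zero]; exact Nat.one_le_cast.2 hf0
    | succ K ih =>
      rw [pow_succ']
      exact (mul_le_mul_of_nonneg_left ih (by linarith)).trans (hgrow K).le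
  have hpoly : (fun K : ℕ => ((2 * K + 1 : ℕ) : ℝ) ^ m) =o[atTop] fun K => (1 + ε) ^ K := by
    refine Asymptotics.IsBigO.trans_isLittleO ?_
      (isLittleO_pow_const_const_pow_of_one_lt (R := ℝ) m (show (1 : ℝ) < 1 + ε by linarith))
    refine (Asymptotics.IsBigO.of_bound 3 ?_).pow m
    filter_upwards [eventually_ge_atTop 1] with K hK
    have : (1 : ℝ) ≤ K := by exact_mod_cast hK
    rw [Real.norm_of_nonneg (by positivity), Real.norm_of_nonneg (by positivity)]
    push_cast
    linarith
  obtain ⟨K, hK⟩ := (hpoly.bound (show (0 : ℝ) < 1 / 2 by norm_num)).exists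
  rw [Real.norm_of_nonneg (by positivity), Real.norm_of_nonneg (by positivity)] at hK
  have hfK : (f K : ℝ) ≤ ((2 * K + 1 : ℕ) : ℝ) ^ m := by exact_mod_cast hf K
  linarith [hexp K, pow_pos (show (0 : ℝ) < 1 + ε by linarith) K]

theorem exists_card_latticeBox_succ_le {ε : ℝ} (hε : 0 < ε) :
    ∃ K, ((latticeBox t (K + 1)).card : ℝ) ≤ (1 + ε) * (latticeBox t K).card :=
  exists_succ_le_mul_of_le_pow (Finset.card_pos.2 ⟨0, zero_mem_latticeBox t 0⟩)
    (card_latticeBox_le t) hε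

end LatticeBox

section TranslationCoordinate

variable {α : Type*} {P : Set α} {ψ : α → ℝ} {R : ℝ}

def IsTranslationAbove (P : Set α) (ψ : α → ℝ) (R : ℝ) (g : Equiv.Perm α) (τ : ℝ) : Prop :=
  ∀ y ∈ P, R ≤ ψ y → g y ∈ P ∧ ψ (g y) = ψ y + τ

theorem IsTranslationAbove.pow_apply {g : Equiv.Perm α} {τ : ℝ}
    (hg : IsTranslationAbove P ψ R g τ) (n : ℕ) {y : α} (hy : y ∈ P) (hR : R + n * |τ| ≤ ψ y) :
    (g ^ n) y ∈ P ∧ ψ ((g ^ n) y) = ψ y + n * τ := by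
  induction n with
  | zero => simpa using hy
  | succ n ih =>
    push_cast at hR
    have hnτ : -(n * |τ|) ≤ n * τ := by
      rw [← mul_neg]; exact mul_le_mul_of_nonneg_left (neg_abs_le τ) n.cast_nonneg
    obtain ⟨hmem, hψ⟩ := ih (by linarith [abs_nonneg τ])
    obtain ⟨hmem', hψ'⟩ := hg _ hmem (by rw [hψ]; linarith [abs_nonneg τ])
    rw [pow_succ', Equiv.Perm.mul_apply]
    exact ⟨hmem', by rw [hψ', hψ]; push_cast; ring⟩

theorem IsTranslationAbove.zpow_apply {g : Equiv.Perm α} {τ : ℝ}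
    (hg : IsTranslationAbove P ψ R g τ) (hg' : IsTranslationAbove P ψ R g⁻¹ (-τ)) (k : ℤ)
    {y : α} (hy : y ∈ P) (hR : R + |(k : ℝ)| * |τ| ≤ ψ y) :
    (g ^ k) y ∈ P ∧ ψ ((g ^ k) y) = ψ y + k * τ := by
  obtain ⟨n, rfl | rfl⟩ := Int.eq_nat_or_neg k
  · simpa using hg.pow_apply n hy (by simpa using hR)
  · simpa [inv_pow] using hg'.pow_apply n hy (by simpa using hR)

theorem exists_mem_eq_add_of_mem_latticeBox {ι : Type*} [Fintype ι] [DecidableEq ι]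
    {g : ι → Equiv.Perm α} {t : ι → ℝ} (hg : ∀ i, IsTranslationAbove P ψ R (g i) (t i))
    (hg' : ∀ i, IsTranslationAbove P ψ R (g i)⁻¹ (-t i)) {K : ℕ} {y₀ : α} (hy₀ : y₀ ∈ P)
    (hR : R + K * ∑ i, |t i| ≤ ψ y₀) {v : ℝ} (hv : v ∈ latticeBox t K) :
    ∃ y ∈ P, ψ y = ψ y₀ + v := by
  obtain ⟨c, hc, rfl⟩ := (mem_latticeBox t).1 hv
  have hbudget : R + ∑ i, |(c i : ℝ)| * |t i| ≤ ψ y₀ := by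
    refine le_trans ?_ hR
    rw [Finset.mul_sum]
    gcongr with i
    exact_mod_cast hc i
  suffices ∀ s : Finset ι, ∃ y ∈ P, ψ y = ψ y₀ + ∑ i ∈ s, (c i : ℝ) * t i from this Finset.univ
  intro s
  induction s using Finset.induction_on with
  | empty => exact ⟨y₀, hy₀, by simp⟩
  | insert j s hj ih =>
    obtain ⟨y, hy, hψy⟩ := ih
    have hsum : ∑ i ∈ insert j s, |(c i : ℝ)| * |t i| ≤ ∑ i, |(c i : ℝ)| * |t i| :=
      Finset.sum_le_univ_sum_of_nonneg fun i => by positivity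
    have hs : -∑ i ∈ s, |(c i : ℝ)| * |t i| ≤ ∑ i ∈ s, (c i : ℝ) * t i := by
      have := Finset.abs_sum_le_sum_abs (fun i => (c i : ℝ) * t i) s
      simp only [abs_mul] at this
      linarith [neg_abs_le (∑ i ∈ s, (c i : ℝ) * t i)]
    rw [Finset.sum_insert hj] at hsum
    obtain ⟨hmem, hψ⟩ := (hg j).zpow_apply (hg' j) (c j) hy (by linarith)
    exact ⟨_, hmem, by rw [hψ, hψy, Finset.sum_insert hj]; ring⟩

theorem Set.InjOn.finite_inter_preimage {β : Type*} {φ : α → β} (hφ : InjOn φ P)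
    (V : Finset β) : (P ∩ φ ⁻¹' V).Finite :=
  Finite.of_finite_image (V.finite_toSet.subset (image_subset_iff.2 fun _ hy => hy.2))
    (hφ.mono inter_subset_left)

theorem Set.InjOn.ncard_inter_preimage_le {β : Type*} {φ : α → β} (hφ : InjOn φ P)
    (V : Finset β) : (P ∩ φ ⁻¹' V).ncard ≤ V.card := by
  rw [← (hφ.mono inter_subset_left).ncard_image, ← ncard_coe_finset]
  exact ncard_le_ncard (image_subset_iff.2 fun _ hy => hy.2) V.finite_toSet

theorem schreierBoundary_subset_of_isTranslationAbove {S : Finset (Equiv.Perm α)} {O : Set α}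
    [DecidableEq S] {t : S → ℝ} (hstep : ∀ h : S, IsTranslationAbove P ψ R h (t h))
    (hstep' : ∀ h : S, IsTranslationAbove P ψ R (h : Equiv.Perm α)⁻¹ (-t h))
    {K : ℕ} {c : ℝ} (hc : R + K * ∑ h, |t h| ≤ c) :
    schreierBoundary S O (P ∩ (ψ · - c) ⁻¹' latticeBox t K) ⊆
      P ∩ (ψ · - c) ⁻¹' ↑(latticeBox t (K + 1) \ latticeBox t K) := by
  have hR : ∀ y ∈ P ∩ (ψ · - c) ⁻¹' latticeBox t K, R ≤ ψ y := fun y hy => by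
    linarith [abs_le_of_mem_latticeBox t hy.2, neg_abs_le (ψ y - c)]
  rintro y ⟨⟨-, hyF⟩, h, hh, hy | hy⟩
  · obtain ⟨hP, hψ⟩ := hstep' ⟨h, hh⟩ _ hy.1 (hR _ hy)
    simp only [Equiv.Perm.coe_inv, Equiv.symm_apply_apply] at hP hψ
    have := add_mul_mem_latticeBox_succ t hy.2 ⟨h, hh⟩ (e := -1) (by norm_num)
    refine ⟨hP, Finset.mem_sdiff.2 ⟨?_, fun hK => hyF ⟨hP, hK⟩⟩⟩
    convert this using 1
    simp only [hψ]; push_cast; ring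
  · obtain ⟨hP, hψ⟩ := hstep ⟨h, hh⟩ _ hy.1 (hR _ hy)
    simp only [Equiv.Perm.coe_inv, Equiv.apply_symm_apply] at hP hψ
    have := add_mul_mem_latticeBox_succ t hy.2 ⟨h, hh⟩ (e := 1) (by norm_num)
    refine ⟨hP, Finset.mem_sdiff.2 ⟨?_, fun hK => hyF ⟨hP, hK⟩⟩⟩
    convert this using 1
    simp only [hψ, Equiv.Perm.coe_inv]; push_cast; ring

theorem HasFolnerSets.of_isTranslationAbove {S : Finset (Equiv.Perm α)} {O : Set α}
    (hPO : P ⊆ O) (hinj : InjOn ψ P) (t : S → ℝ)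
    (hstep : ∀ h : S, IsTranslationAbove P ψ R h (t h))
    (hstep' : ∀ h : S, IsTranslationAbove P ψ R (h : Equiv.Perm α)⁻¹ (-t h))
    (hunb : ∀ B, ∃ y ∈ P, B ≤ ψ y) : HasFolnerSets S O := by
  classical
  intro ε hε
  obtain ⟨K, hK⟩ := exists_card_latticeBox_succ_le t hε
  obtain ⟨y₀, hy₀, hψy₀⟩ := hunb (R + K * ∑ h, |t h|)
  have hφ : InjOn (ψ · - ψ y₀) P := fun a ha b hb h => hinj ha hb (sub_left_inj.1 h)
  set F := P ∩ (ψ · - ψ y₀) ⁻¹' latticeBox t K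
  have hFfin : F.Finite := hφ.finite_inter_preimage _
  have hcardF : F.ncard = (latticeBox t K).card := by
    refine le_antisymm (hφ.ncard_inter_preimage_le _) ?_
    have hreach : ↑(latticeBox t K) ⊆ (ψ · - ψ y₀) '' F := fun v hv => by
      obtain ⟨y, hy, hψ⟩ := exists_mem_eq_add_of_mem_latticeBox (g := Subtype.val) hstep hstep'
        hy₀ hψy₀ hv
      exact ⟨y, ⟨hy, by simpa [hψ] using hv⟩, by simp [hψ]⟩
    rw [← ncard_coe_finset]
    exact (ncard_le_ncard hreach (hFfin.image _)).trans (ncard_image_le hFfin)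
  have hbdry : (schreierBoundary S O F).ncard ≤ (latticeBox t (K + 1) \ latticeBox t K).card :=
    (ncard_le_ncard (schreierBoundary_subset_of_isTranslationAbove hstep hstep' hψy₀)
      (hφ.finite_inter_preimage _)).trans (hφ.ncard_inter_preimage_le _)
  have hsdiff := Finset.card_sdiff_add_card_eq_card (latticeBox_mono t (Nat.le_add_right K 1))
  have hcard : (schreierBoundary S O F).ncard + (latticeBox t K).card ≤
      (latticeBox t (K + 1)).card := by omega
  refine ⟨F, hFfin, ⟨y₀, hy₀, by simpa using zero_mem_latticeBox t K⟩, fun y hy => hPO hy.1, ?_⟩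
  rw [hcardF]
  have : ((schreierBoundary S O F).ncard : ℝ) + (latticeBox t K).card ≤
      (latticeBox t (K + 1)).card := by exact_mod_cast hcard
  linarith

theorem HasFolnerSets.of_tendsto {S : Finset (Equiv.Perm α)} {O Z : Set α} {L : Filter α}
    (hO : IsInvariantUnder S O) (hfreq : ∃ᶠ y in L, y ∈ O)
    (hmaps : ∀ h ∈ S, Tendsto h L L ∧ Tendsto ⇑h⁻¹ L L) (hZ : Z ∈ L) (hinj : InjOn ψ Z)
    (hψ : Tendsto ψ L atTop) (hZψ : comap ψ atTop ⊓ 𝓟 Z ≤ L) (t : S → ℝ)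
    (hshift : ∀ h : S, ∀ᶠ y in L, ψ ((h : Equiv.Perm α) y) = ψ y + t h) :
    HasFolnerSets S O := by
  set G := {y | ∀ h : S, ((h : Equiv.Perm α) y ∈ Z ∧ ψ ((h : Equiv.Perm α) y) = ψ y + t h) ∧
      ((h : Equiv.Perm α)⁻¹ y ∈ Z ∧ ψ ((h : Equiv.Perm α)⁻¹ y) = ψ y + -t h)}
  have hG : G ∈ L := by
    refine eventually_all.2 fun h => ?_
    obtain ⟨hL, hL'⟩ := hmaps h h.2
    filter_upwards [hL.eventually hZ, hL'.eventually hZ, hL'.eventually (hshift h), hshift h]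
      with y hy₁ hy₂ hy₃ hy₄
    simp only [Equiv.Perm.coe_inv, Equiv.apply_symm_apply] at hy₃
    exact ⟨⟨hy₁, hy₄⟩, hy₂, by rw [Equiv.Perm.coe_inv]; linarith⟩
  obtain ⟨R, hR⟩ : ∃ R, ∀ y ∈ Z, R ≤ ψ y → y ∈ G := by
    obtain ⟨s, hs, hsub⟩ := mem_comap.1 (mem_inf_principal.1 (hZψ hG))
    obtain ⟨R, hR⟩ := mem_atTop_sets.1 hs
    exact ⟨R, fun y hy hRy => hsub (hR _ hRy) hy⟩
  refine HasFolnerSets.of_isTranslationAbove (P := O ∩ Z) (R := R) inter_subset_left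
    (hinj.mono inter_subset_right) t (fun h y hy hRy => ?_) (fun h y hy hRy => ?_) fun B => ?_
  · exact ⟨⟨(hO h h.2).1 hy.1, (hR y hy.2 hRy h).1.1⟩, (hR y hy.2 hRy h).1.2⟩
  · exact ⟨⟨(hO h h.2).2 hy.1, (hR y hy.2 hRy h).2.1⟩, (hR y hy.2 hRy h).2.2⟩
  · obtain ⟨y, hyO, hyZ, hyB⟩ :=
      (hfreq.and_eventually (Eventually.and hZ (hψ.eventually_ge_atTop B))).exists
    exact ⟨y, ⟨hyO, hyZ⟩, hyB⟩

end TranslationCoordinate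

section RealLine

variable {S : Finset (Equiv.Perm ℝ)} {O : Set ℝ}

theorem StrictMono.perm_inv {β : Type*} [LinearOrder β] {f : Equiv.Perm β}
    (hf : StrictMono f) : StrictMono ⇑f⁻¹ :=
  fun a b hab => hf.lt_iff_lt.1 (by simpa using hab)

theorem StrictMono.tendsto_atTop_perm {f : Equiv.Perm ℝ} (hf : StrictMono f) :
    Tendsto f atTop atTop :=
  hf.monotone.tendsto_atTop_atTop fun b => ⟨f⁻¹ b, by simp⟩

theorem StrictMono.tendsto_nhdsLT_perm {f : Equiv.Perm ℝ} (hf : StrictMono f) {σ : ℝ}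
    (hσ : f σ = σ) : Tendsto f (𝓝[<] σ) (𝓝[<] σ) := by
  refine tendsto_nhdsWithin_iff.2 ⟨?_, ?_⟩
  · have := (hf.monotone.continuous_of_surjective f.surjective).tendsto σ
    rw [hσ] at this
    exact this.mono_left nhdsWithin_le_nhds
  · filter_upwards [self_mem_nhdsWithin] with y hy
    exact hσ ▸ hf hy

theorem apply_sSup_eq_of_strictMono {h : Equiv.Perm ℝ} (hh : StrictMono h)
    (hO : MapsTo h O O ∧ MapsTo ⇑h⁻¹ O O) (hne : O.Nonempty) (hbdd : BddAbove O) :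
    h (sSup O) = sSup O := by
  have hle : ∀ g : Equiv.Perm ℝ, Monotone g → MapsTo ⇑g⁻¹ O O → sSup O ≤ g (sSup O) :=
    fun g hg hgO => csSup_le hne fun y hy => by simpa using hg (le_csSup hbdd (hgO hy))
  refine le_antisymm ?_ (hle h hh.monotone hO.2)
  simpa using hh.monotone (hle h⁻¹ hh.perm_inv.monotone (by simpa using hO.1))

theorem frequently_nhdsLT_sSup (hne : O.Nonempty) (hbdd : BddAbove O) (hσ : sSup O ∉ O) :
    ∃ᶠ y in 𝓝[<] sSup O, y ∈ O := by
  intro hev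
  obtain ⟨l, hl, hlO⟩ := mem_nhdsLT_iff_exists_Ioo_subset.1 hev
  obtain ⟨y, hyO, hly⟩ := exists_lt_of_lt_csSup hne hl
  exact hlO ⟨hly, (le_csSup hbdd hyO).lt_of_ne fun h => hσ (h ▸ hyO)⟩ hyO

theorem HasFolnerSets.of_not_bddAbove (hO : IsInvariantUnder S O)
    (hmono : ∀ h ∈ S, StrictMono h) (htrans : ∀ h ∈ S, ∃ n : ℝ, ∀ᶠ x in atTop, h x = x + n)
    (hbdd : ¬BddAbove O) : HasFolnerSets S O := by
  choose n hn using fun h : S => htrans h h.2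
  refine .of_tendsto (ψ := id) hO ?_ (fun h hh => ⟨(hmono h hh).tendsto_atTop_perm,
    (hmono h hh).perm_inv.tendsto_atTop_perm⟩) univ_mem (injOn_id _) tendsto_id
    (inf_le_left.trans comap_id.le) n hn
  exact frequently_atTop.2 fun a =>
    let ⟨y, hyO, hay⟩ := not_bddAbove_iff.1 hbdd a
    ⟨y, hay.le, hyO⟩

theorem comap_atTop_inf_principal_le_nhdsLT {ψ : ℝ → ℝ} {l σ : ℝ} (hl : l < σ)
    (hψ : StrictMonoOn ψ (Ioo l σ)) : comap ψ atTop ⊓ 𝓟 (Ioo l σ) ≤ 𝓝[<] σ := by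
  intro U hU
  obtain ⟨m, hm, hmU⟩ := mem_nhdsLT_iff_exists_Ioo_subset.1 hU
  have hmax : max m l < σ := max_lt hm hl
  have hq : (max m l + σ) / 2 ∈ Ioo l σ :=
    ⟨by linarith [le_max_right m l], by linarith⟩
  refine mem_inf_of_inter (preimage_mem_comap (Ici_mem_atTop (ψ ((max m l + σ) / 2))))
    (mem_principal_self _) ?_
  rintro y ⟨hqy, hy⟩
  have := (hψ.le_iff_le hq hy).1 hqy
  exact hmU ⟨by linarith [le_max_left m l], hy.2⟩

theorem HasFolnerSets.of_nhdsLT {σ l : ℝ} {ψ : ℝ → ℝ} (hO : IsInvariantUnder S O)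
    (hfreq : ∃ᶠ y in 𝓝[<] σ, y ∈ O) (hmono : ∀ h ∈ S, StrictMono h) (hfix : ∀ h ∈ S, h σ = σ)
    (hl : l < σ) (hψmono : StrictMonoOn ψ (Ioo l σ)) (hψ : Tendsto ψ (𝓝[<] σ) atTop)
    (t : S → ℝ) (hshift : ∀ h : S, ∀ᶠ y in 𝓝[<] σ, ψ ((h : Equiv.Perm ℝ) y) = ψ y + t h) :
    HasFolnerSets S O :=
  .of_tendsto hO hfreq (fun h hh => ⟨(hmono h hh).tendsto_nhdsLT_perm (hfix h hh),
      (hmono h hh).perm_inv.tendsto_nhdsLT_perm (Equiv.Perm.inv_eq_iff_eq.2 (hfix h hh).symm)⟩)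
    (Ioo_mem_nhdsLT hl) hψmono.injOn hψ (comap_atTop_inf_principal_le_nhdsLT hl hψmono) t hshift

theorem strictMonoOn_inv_sub (σ : ℝ) : StrictMonoOn (fun y => (σ - y)⁻¹) (Iio σ) :=
  fun _ ha _ hb hab => (inv_lt_inv₀ (sub_pos.2 ha) (sub_pos.2 hb)).2 (by linarith)

theorem tendsto_inv_sub_nhdsLT (σ : ℝ) : Tendsto (fun y => (σ - y)⁻¹) (𝓝[<] σ) atTop := by
  refine tendsto_inv_nhdsGT_zero.comp (tendsto_nhdsWithin_iff.2 ⟨?_, ?_⟩)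
  · exact ((continuous_const.sub continuous_id).tendsto' σ 0 (sub_self σ)).mono_left
      nhdsWithin_le_nhds
  · filter_upwards [self_mem_nhdsWithin] with y hy using sub_pos.2 (mem_Iio.1 hy)

theorem HasFolnerSets.of_nhdsLT_translations {σ : ℝ} (hO : IsInvariantUnder S O)
    (hfreq : ∃ᶠ y in 𝓝[<] σ, y ∈ O) (hmono : ∀ h ∈ S, StrictMono h) (hfix : ∀ h ∈ S, h σ = σ)
    (τ : S → ℝ)
    (hshift : ∀ h : S, ∀ᶠ y in 𝓝[<] σ, (σ - (h : Equiv.Perm ℝ) y)⁻¹ = (σ - y)⁻¹ + τ h) :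
    HasFolnerSets S O :=
  .of_nhdsLT hO hfreq hmono hfix (sub_one_lt σ)
    ((strictMonoOn_inv_sub σ).mono Ioo_subset_Iio_self) (tendsto_inv_sub_nhdsLT σ) τ hshift

theorem HasFolnerSets.of_nhdsLT_homotheties {σ : ℝ} (hO : IsInvariantUnder S O)
    (hfreq : ∃ᶠ y in 𝓝[<] σ, y ∈ O) (hmono : ∀ h ∈ S, StrictMono h) (hfix : ∀ h ∈ S, h σ = σ)
    (z : ℝ) (r : S → ℝ) (hr : ∀ h, 0 < r h)
    (hshift : ∀ h : S, ∀ᶠ y in 𝓝[<] σ,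
      (σ - (h : Equiv.Perm ℝ) y)⁻¹ - z = r h * ((σ - y)⁻¹ - z)) :
    HasFolnerSets S O := by
  have hpos : ∀ᶠ y in 𝓝[<] σ, z < (σ - y)⁻¹ := (tendsto_inv_sub_nhdsLT σ).eventually_gt_atTop z
  obtain ⟨l, hl, hlz⟩ := mem_nhdsLT_iff_exists_Ioo_subset.1 hpos
  have hsub : Tendsto (fun y => (σ - y)⁻¹ - z) (𝓝[<] σ) atTop := by
    simpa only [sub_eq_add_neg] using
      tendsto_atTop_add_const_right _ (-z) (tendsto_inv_sub_nhdsLT σ)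
  refine .of_nhdsLT (ψ := fun y => Real.log ((σ - y)⁻¹ - z)) hO hfreq hmono hfix hl
    (fun a ha b hb hab => Real.log_lt_log (sub_pos.2 (hlz ha))
      (by linarith [strictMonoOn_inv_sub σ ha.2 hb.2 hab]))
    (Real.tendsto_log_atTop.comp hsub) (fun h => Real.log (r h)) fun h => ?_
  filter_upwards [hshift h, hpos] with y hy hyz
  rw [hy, Real.log_mul (hr h).ne' (sub_pos.2 hyz).ne']
  ring

end RealLine

section Mobius

def mobiusDenom (A : SL2Z) (x : ℝ) : ℝ := (A 1 0 : ℤ) * x + (A 1 1 : ℤ)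

theorem continuous_mobiusDenom (A : SL2Z) : Continuous (mobiusDenom A) := by
  unfold mobiusDenom; fun_prop

theorem SL2Z.det_real (A : SL2Z) :
    ((A 0 0 : ℤ) : ℝ) * (A 1 1 : ℤ) - (A 0 1 : ℤ) * (A 1 0 : ℤ) = 1 := by
  have := A.det_coe
  rw [Matrix.det_fin_two] at this
  exact_mod_cast this

variable {A : SL2Z} {σ : ℝ}

theorem IsFixedPt.mul_mobiusDenom_eq_one (h : IsFixedPt A σ) :
    (((A 0 0 : ℤ) : ℝ) - σ * (A 1 0 : ℤ)) * mobiusDenom A σ = 1 := by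
  unfold IsFixedPt at h
  unfold mobiusDenom
  linear_combination SL2Z.det_real A + ((A 1 0 : ℤ) : ℝ) * h

theorem IsFixedPt.inv_sub_mobius (h : IsFixedPt A σ) {y : ℝ} (hy : mobiusDefinedAt A y)
    (hyσ : y ≠ σ) :
    (σ - mobius A y)⁻¹ =
      mobiusDenom A σ ^ 2 * (σ - y)⁻¹ - (A 1 0 : ℤ) * mobiusDenom A σ := by
  have hμ := h.mul_mobiusDenom_eq_one
  have hne : ((A 0 0 : ℤ) : ℝ) - σ * (A 1 0 : ℤ) ≠ 0 := left_ne_zero_of_mul_eq_one hμ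
  have hsub : σ - y ≠ 0 := sub_ne_zero.2 hyσ.symm
  have hinv : (σ - y)⁻¹ * (σ - y) = 1 := inv_mul_cancel₀ hsub
  unfold IsFixedPt at h
  unfold mobiusDefinedAt at hy
  have key : σ - mobius A y =
      ((((A 0 0 : ℤ) : ℝ) - σ * (A 1 0 : ℤ)) * (σ - y)) / ((A 1 0 : ℤ) * y + (A 1 1 : ℤ)) := by
    rw [mobius, eq_div_iff hy, sub_mul, div_mul_cancel₀ _ hy]
    linear_combination -h
  rw [key, inv_div, div_eq_iff (mul_ne_zero hne hsub)]
  unfold mobiusDenom at hμ ⊢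
  linear_combination
    (-(((A 1 0 : ℤ) * σ + (A 1 1 : ℤ)) ^ 2 * (((A 0 0 : ℤ) : ℝ) - σ * (A 1 0 : ℤ)))) * hinv +
      (((A 1 0 : ℤ) : ℝ) * (σ - y) - ((A 1 0 : ℤ) * σ + (A 1 1 : ℤ))) * hμ

theorem isFixedPt_of_eqOn_Ioo {f : ℝ → ℝ} {l : ℝ} (hl : l < σ) (hf : ContinuousAt f σ)
    (hσ : f σ = σ) (hA : ∀ y ∈ Ioo l σ, mobiusDefinedAt A y ∧ f y = mobius A y) :
    IsFixedPt A σ := by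
  have hlim : Tendsto (fun y => f y * mobiusDenom A y) (𝓝[<] σ) (𝓝 (σ * mobiusDenom A σ)) := by
    have := hf.tendsto.mul ((continuous_mobiusDenom A).tendsto σ)
    rw [hσ] at this
    exact this.mono_left nhdsWithin_le_nhds
  have hnum : Tendsto (fun y : ℝ => ((A 0 0 : ℤ) : ℝ) * y + (A 0 1 : ℤ)) (𝓝[<] σ)
      (𝓝 (((A 0 0 : ℤ) : ℝ) * σ + (A 0 1 : ℤ))) :=
    (Continuous.tendsto (by fun_prop) σ).mono_left nhdsWithin_le_nhds
  refine tendsto_nhds_unique (hnum.congr' ?_) hlim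
  filter_upwards [Ioo_mem_nhdsLT hl] with y hy
  obtain ⟨hdef, hfy⟩ := hA y hy
  rw [hfy, mobius, mobiusDenom, div_mul_cancel₀ _ hdef]

theorem IsFixedPt.mobiusDenom_sq_eq_one_of_rat {q : ℚ} (h : IsFixedPt A q) :
    mobiusDenom A q ^ 2 = 1 := by
  obtain ⟨u, v, huv⟩ := Rat.isCoprime_num_den q
  have hq : (q : ℝ) * q.den = q.num := by exact_mod_cast Rat.mul_den_eq_num q
  have huv' : (u : ℝ) * q.num + v * q.den = 1 := by exact_mod_cast huv
  have hμ := h.mul_mobiusDenom_eq_one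
  unfold IsFixedPt at h
  unfold mobiusDenom at hμ ⊢
  -- `A` maps `(num, den)` to `μ • (num, den)`, so `μ` and `1 / μ` are integers by Bézout
  set m : ℤ := u * (A 0 0 * q.num + A 0 1 * q.den) + v * (A 1 0 * q.num + A 1 1 * q.den)
  set m' : ℤ := u * (A 1 1 * q.num - A 0 1 * q.den) + v * (A 0 0 * q.den - A 1 0 * q.num)
  have hm : (m : ℝ) = (A 1 0 : ℤ) * (q : ℝ) + (A 1 1 : ℤ) := by
    simp only [m]
    push_cast
    linear_combination
      ((((A 1 0 : ℤ) : ℝ) * q + (A 1 1 : ℤ)) * u - u * (A 0 0 : ℤ) - v * (A 1 0 : ℤ)) * hq +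
        u * (q.den : ℝ) * h + (((A 1 0 : ℤ) : ℝ) * q + (A 1 1 : ℤ)) * huv'
  have hm' : (m' : ℝ) = (A 0 0 : ℤ) - (q : ℝ) * (A 1 0 : ℤ) := by
    simp only [m']
    push_cast
    linear_combination (-(u : ℝ) * q.den) * h +
        ((((A 0 0 : ℤ) : ℝ) - (A 1 0 : ℤ) * q) * u - u * (A 1 1 : ℤ) + v * (A 1 0 : ℤ)) * hq +
        (((A 0 0 : ℤ) : ℝ) - (A 1 0 : ℤ) * q) * huv'
  have hmm' : m * m' = 1 := by
    have : (m : ℝ) * m' = 1 := by rw [hm, hm', mul_comm]; exact hμ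
    exact_mod_cast this
  rw [← hm]
  rcases Int.eq_one_or_neg_one_of_mul_eq_one hmm' with h1 | h1 <;> simp [h1]

theorem IsFixedPt.mul_sub_eq_of_irrational {B : SL2Z} (hA : IsFixedPt A σ)
    (hB : IsFixedPt B σ) (hσ : Irrational σ) :
    B 1 0 * (A 1 1 - A 0 0) = A 1 0 * (B 1 1 - B 0 0) := by
  by_contra hne
  have he : B 1 0 * (A 1 1 - A 0 0) - A 1 0 * (B 1 1 - B 0 0) ≠ 0 := sub_ne_zero.2 hne
  unfold IsFixedPt at hA hB
  refine ((hσ.intCast_mul he).add_intCast (A 1 0 * B 0 1 - B 1 0 * A 0 1)).ne_zero ?_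
  push_cast
  linear_combination (-((B 1 0 : ℤ) : ℝ)) * hA + ((A 1 0 : ℤ) : ℝ) * hB

theorem InGTilde.continuous {f : Equiv.Perm ℝ} (hf : InGTilde f) : Continuous f :=
  hf.1.monotone.continuous_of_surjective f.surjective

theorem InGTilde.exists_eventually_eq_add {f : Equiv.Perm ℝ} (hf : InGTilde f) :
    ∃ n : ℝ, ∀ᶠ x in atTop, f x = x + n := by
  obtain ⟨-, -, n, M, hM⟩ := hf
  refine ⟨n, ?_⟩
  filter_upwards [eventually_ge_atTop M] with x hx using hM x (hx.trans (le_abs_self x))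

theorem InGTilde.exists_mobiusLikeOn_Ioo {f : Equiv.Perm ℝ} (hf : InGTilde f) (σ : ℝ) :
    ∃ l < σ, MobiusLikeOn f (Ioo l σ) := by
  obtain ⟨B, hB⟩ := hf.2.1
  have hev : ∀ᶠ y in 𝓝[<] σ, y ∉ B := by
    have hc : (↑B \ {σ} : Set ℝ)ᶜ ∈ 𝓝 σ :=
      (B.finite_toSet.subset sdiff_subset).isClosed.isOpen_compl.mem_nhds (by simp)
    filter_upwards [nhdsWithin_le_nhds hc, self_mem_nhdsWithin] with y hy hyσ hyB
    exact hy ⟨hyB, ne_of_lt hyσ⟩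
  obtain ⟨l, hl, hlB⟩ := mem_nhdsLT_iff_exists_Ioo_subset.1 hev
  have hmid : (l + σ) / 2 ∈ Ioo l σ := ⟨by linarith [mem_Iio.1 hl], by linarith [mem_Iio.1 hl]⟩
  obtain ⟨A, hA⟩ := hB _ (hlB hmid)
  exact ⟨l, hl, A, fun y hy =>
    hA y (isPreconnected_Ioo.subset_connectedComponentIn hmid (fun z hz => hlB hz) hy)⟩

theorem InGTilde.exists_isFixedPt_inv_sub {f : Equiv.Perm ℝ} (hf : InGTilde f) (hσ : f σ = σ) :
    ∃ A : SL2Z, IsFixedPt A σ ∧ ∀ᶠ y in 𝓝[<] σ,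
      (σ - f y)⁻¹ = mobiusDenom A σ ^ 2 * (σ - y)⁻¹ - (A 1 0 : ℤ) * mobiusDenom A σ := by
  obtain ⟨l, hl, A, hA⟩ := hf.exists_mobiusLikeOn_Ioo σ
  have hfix := isFixedPt_of_eqOn_Ioo hl hf.continuous.continuousAt hσ hA
  refine ⟨A, hfix, ?_⟩
  filter_upwards [Ioo_mem_nhdsLT hl] with y hy
  rw [(hA y hy).2]
  exact hfix.inv_sub_mobius (hA y hy).1 hy.2.ne

-- `z` is a common fixed point of the affine maps `u ↦ μ² u - c μ`, `μ = mobiusDenom (A i) σ`.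
theorem exists_common_affine_fixedPoint {ι : Type*} {A : ι → SL2Z} (hA : ∀ i, IsFixedPt (A i) σ)
    {i₀ : ι} (hi₀ : mobiusDenom (A i₀) σ ^ 2 ≠ 1) :
    ∃ z : ℝ, ∀ i, (A i 1 0 : ℤ) * mobiusDenom (A i) σ = (mobiusDenom (A i) σ ^ 2 - 1) * z := by
  have hirr : Irrational σ := by
    rintro ⟨q, rfl⟩
    exact hi₀ (hA i₀).mobiusDenom_sq_eq_one_of_rat
  -- `D i` is the derivative at `σ` of the fixed-point polynomial `c x² + (d - a) x - b` of `A i`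
  set D : ι → ℝ := fun i => 2 * (A i 1 0 : ℤ) * σ + (A i 1 1 : ℤ) - (A i 0 0 : ℤ)
  have hμD : ∀ i, mobiusDenom (A i) σ ^ 2 - 1 = mobiusDenom (A i) σ * D i := fun i => by
    have := (hA i).mul_mobiusDenom_eq_one
    simp only [D]
    unfold mobiusDenom at this ⊢
    linear_combination this
  have hD₀ : D i₀ ≠ 0 := fun h0 => hi₀ (by linear_combination hμD i₀ + mobiusDenom (A i₀) σ * h0)
  refine ⟨(A i₀ 1 0 : ℤ) / D i₀, fun i => ?_⟩
  have hprop : ((A i 1 0 : ℤ) : ℝ) * D i₀ = (A i₀ 1 0 : ℤ) * D i := by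
    have := congrArg (Int.cast : ℤ → ℝ) ((hA i₀).mul_sub_eq_of_irrational (hA i) hirr)
    push_cast at this
    simp only [D]
    linear_combination this
  rw [hμD, mul_div_assoc', eq_div_iff hD₀]
  linear_combination mobiusDenom (A i) σ * hprop

theorem HasFolnerSets.of_nhdsLT_gTilde {S : Finset (Equiv.Perm ℝ)} {O : Set ℝ}
    (hO : IsInvariantUnder S O) (hS : ∀ h ∈ S, InGTilde h) (hfix : ∀ h ∈ S, h σ = σ)
    (hfreq : ∃ᶠ y in 𝓝[<] σ, y ∈ O) : HasFolnerSets S O := by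
  have hmono : ∀ h ∈ S, StrictMono h := fun h hh => (hS h hh).1
  choose A hA hgerm using fun h : S => (hS h h.2).exists_isFixedPt_inv_sub (hfix h h.2)
  by_cases hpar : ∀ h, mobiusDenom (A h) σ ^ 2 = 1
  · refine .of_nhdsLT_translations hO hfreq hmono hfix
      (fun h => -((A h 1 0 : ℤ) * mobiusDenom (A h) σ)) fun h => ?_
    filter_upwards [hgerm h] with y hy
    rw [hy, hpar h]
    ring
  obtain ⟨h₀, hμ₀⟩ := not_forall.1 hpar
  obtain ⟨z, hz⟩ := exists_common_affine_fixedPoint hA hμ₀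
  refine .of_nhdsLT_homotheties hO hfreq hmono hfix z (fun h => mobiusDenom (A h) σ ^ 2)
    (fun h => sq_pos_of_ne_zero (right_ne_zero_of_mul_eq_one (hA h).mul_mobiusDenom_eq_one))
    fun h => ?_
  filter_upwards [hgerm h] with y hy
  rw [hy]
  linear_combination -hz h

end Mobius

/-- The Schreier graph on the orbit of any `s ∈ ℝ` of a subgroup of `G̃` generated by
a finite set `S` is amenable: for every `ε > 0` there is a finite nonempty `F` inside
the orbit whose boundary `∂F` satisfies `#∂F ≤ ε · #F`. -/
theorem schreier_graph_amenable
    (S : Finset (Equiv.Perm ℝ)) (hS : ∀ h ∈ S, InGTilde h) (s : ℝ) :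
    ∀ ε : ℝ, 0 < ε →
      ∃ F : Set ℝ, F.Finite ∧ F.Nonempty ∧
        F ⊆ {x : ℝ | ∃ h ∈ Subgroup.closure (↑S : Set (Equiv.Perm ℝ)),
          (h : Equiv.Perm ℝ) s = x} ∧
        (({y : ℝ | (y ∈ {x : ℝ | ∃ h ∈ Subgroup.closure (↑S : Set (Equiv.Perm ℝ)),
              (h : Equiv.Perm ℝ) s = x} \ F) ∧
            ∃ h ∈ S, (h : Equiv.Perm ℝ) y ∈ F ∨ (h⁻¹ : Equiv.Perm ℝ) y ∈ F}).ncard : ℝ) ≤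
          ε * F.ncard := by
  set O : Set ℝ := {x : ℝ | ∃ h ∈ Subgroup.closure (↑S : Set (Equiv.Perm ℝ)),
    (h : Equiv.Perm ℝ) s = x}
  change HasFolnerSets S O
  have hO : IsInvariantUnder S O := isInvariantUnder_orbit S s
  have hne : O.Nonempty := ⟨s, 1, one_mem _, rfl⟩
  have hmono : ∀ h ∈ S, StrictMono h := fun h hh => (hS h hh).1
  by_cases hbdd : BddAbove O
  · have hfix : ∀ h ∈ S, h (sSup O) = sSup O := fun h hh =>
      apply_sSup_eq_of_strictMono (hmono h hh) (hO h hh) hne hbdd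
    by_cases hσ : sSup O ∈ O
    · exact .of_common_fixedPoint hσ hfix
    · exact .of_nhdsLT_gTilde hO hS hfix (frequently_nhdsLT_sSup hne hbdd hσ)
  · exact .of_not_bddAbove hO hmono (fun h hh => (hS h hh).exists_eventually_eq_add) hbdd

end
end

section
/- Let X be a countable set and let Q : X → X → ℝ≥0∞ be a Markov kernel, i.e. ∑'_{y ∈ X} Q(x, y) = 1 for every x ∈ X. Then for all x, y ∈ X, the expected number of visits to y starting from x is at most the expected number of visits to y starting from y: ∑'_{n ∈ ℕ} Qⁿ(x, y) ≤ ∑'_{n ∈ ℕ} Qⁿ(y, y), where Q⁰(u, v) = 1 if u = v and 0 otherwise, and Q^{n+1}(u, v) = ∑'_{z ∈ X} Q(u, z) · Qⁿ(z, v). -/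
open scoped ENNReal

noncomputable section

/- Iterates of a kernel: `kerPow Q 0` is the identity kernel and
`kerPow Q (n+1) x y = ∑' z, Q x z * kerPow Q n z y`. -/
open Classical in
def kerPow {X : Type*} (Q : X → X → ℝ≥0∞) : ℕ → X → X → ℝ≥0∞
  | 0 => fun x y => if x = y then 1 else 0
  | n + 1 => fun x y => ∑' z : X, Q x z * kerPow Q n z y

/-!
Write `S N x = ∑_{n < N} Qⁿ(x, y)`. For `x ≠ y` the `n = 0` term vanishes, so
`S (N + 1) x = ∑_z Q(x, z) S N z` is a sub-average of the values of `S N`. Hence, by induction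
on `N`, `S N` is maximal at `y`: `S (N + 1) x ≤ S N y ≤ S (N + 1) y`. Letting `N → ∞` gives the
theorem.
-/

namespace kerPow

variable {X : Type*} (Q : X → X → ℝ≥0∞)

theorem zero_apply_of_ne {x y : X} (hxy : x ≠ y) : kerPow Q 0 x y = 0 := by
  simp [kerPow, hxy]

theorem succ_apply (n : ℕ) (x y : X) : kerPow Q (n + 1) x y = ∑' z, Q x z * kerPow Q n z y :=
  rfl

theorem sum_range_succ_apply_of_ne (N : ℕ) {x y : X} (hxy : x ≠ y) :
    ∑ n ∈ Finset.range (N + 1), kerPow Q n x y =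
      ∑' z, Q x z * ∑ n ∈ Finset.range N, kerPow Q n z y := by
  simp_rw [Finset.sum_range_succ', zero_apply_of_ne Q hxy, add_zero, succ_apply, Finset.mul_sum]
  exact (Summable.tsum_finsetSum fun _ _ => ENNReal.summable).symm

theorem sum_range_apply_le_sum_range_apply_self (hQ : ∀ x, ∑' y, Q x y ≤ 1) (y : X) (N : ℕ)
    (x : X) :
    ∑ n ∈ Finset.range N, kerPow Q n x y ≤ ∑ n ∈ Finset.range N, kerPow Q n y y := by
  induction N generalizing x with
  | zero => simp
  | succ N ih =>
    obtain rfl | hxy := eq_or_ne x y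
    · exact le_rfl
    calc ∑ n ∈ Finset.range (N + 1), kerPow Q n x y
        = ∑' z, Q x z * ∑ n ∈ Finset.range N, kerPow Q n z y :=
          sum_range_succ_apply_of_ne Q N hxy
      _ ≤ ∑' z, Q x z * ∑ n ∈ Finset.range N, kerPow Q n y y :=
          ENNReal.tsum_le_tsum fun z => mul_le_mul_right (ih z) _
      _ = (∑' z, Q x z) * ∑ n ∈ Finset.range N, kerPow Q n y y := ENNReal.tsum_mul_right
      _ ≤ ∑ n ∈ Finset.range N, kerPow Q n y y := mul_le_of_le_one_left zero_le (hQ x)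
      _ ≤ ∑ n ∈ Finset.range (N + 1), kerPow Q n y y :=
          Finset.sum_le_sum_of_subset (Finset.range_subset_range.2 N.le_succ)

theorem tsum_apply_le_tsum_apply_self (hQ : ∀ x, ∑' y, Q x y ≤ 1) (x y : X) :
    ∑' n, kerPow Q n x y ≤ ∑' n, kerPow Q n y y := by
  simp_rw [ENNReal.tsum_eq_iSup_nat]
  exact iSup_mono fun N => sum_range_apply_le_sum_range_apply_self Q hQ y N x

end kerPow

theorem expected_visits_le_expected_visits_from_target_general
    {X : Type*} (Q : X → X → ℝ≥0∞)
    (hQ : ∀ x : X, ∑' y : X, Q x y = 1) (x y : X) :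
    ∑' n : ℕ, kerPow Q n x y ≤ ∑' n : ℕ, kerPow Q n y y :=
  kerPow.tsum_apply_le_tsum_apply_self Q (fun x => (hQ x).le) x y

/-- For a Markov kernel `Q` on a countable set, the expected number of visits to `y`
starting from `x` is at most the expected number of visits to `y` starting from `y`. -/
theorem expected_visits_le_expected_visits_from_target
    {X : Type*} [Countable X] (Q : X → X → ℝ≥0∞)
    (hQ : ∀ x : X, ∑' y : X, Q x y = 1) (x y : X) :
    ∑' n : ℕ, kerPow Q n x y ≤ ∑' n : ℕ, kerPow Q n y y :=
  expected_visits_le_expected_visits_from_target_general Q hQ x y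

end
end

section
/- Let X be a countable set and let P : X → X → ℝ≥0∞ be a doubly stochastic kernel, i.e. ∑'_{y} P(x, y) = 1 for every x and ∑'_{x} P(x, y) = 1 for every y. Let Pᵀ denote the transposed kernel Pᵀ(x, y) = P(y, x). Let o ∈ X be such that ∑'_{n ∈ ℕ} (Pᵀ)ⁿ(o, o) < ∞, and let f : X → ℝ≥0∞ satisfy ∑'_{x ∈ X} f(x) < ∞. Then ∑'_{n ∈ ℕ} ∑'_{x ∈ X} Pⁿ(o, x) · f(x) ≤ (∑'_{x ∈ X} f(x)) · (∑'_{n ∈ ℕ} (Pᵀ)ⁿ(o, o)); in particular this double sum is finite. -/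
/-!
Exchanging the two sums turns the left-hand side into `∑' x, G(x, o) · f x`, where
`G(x, o) = ∑' n, (Pᵀ)ⁿ(o, x)` is the Green function of the transposed kernel, which is
substochastic because the columns of `P` sum to one. For a substochastic kernel the Green
function is maximal on the diagonal, `G(x, o) ≤ G(o, o)`: by first-step analysis, the
truncated sums `∑_{n<N} Qⁿ(x, o)` are dominated by `∑_{n<N} Qⁿ(o, o)`, by induction on `N`.
-/

open scoped ENNReal

noncomputable section

section KernelPowers

variable {X : Type*} (Q : X → X → ℝ≥0∞)

lemma kerPow_zero_of_ne {x y : X} (h : x ≠ y) : kerPow Q 0 x y = 0 := by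
  simp [kerPow, h]

lemma kerPow_succ_right (n : ℕ) (x y : X) :
    kerPow Q (n + 1) x y = ∑' z : X, kerPow Q n x z * Q z y := by
  classical
  induction n generalizing x y with
  | zero =>
    simp only [kerPow, mul_ite, ite_mul, mul_one, one_mul, mul_zero, zero_mul]
    rw [tsum_eq_single y (by intro b hb; simp [hb]),
      tsum_eq_single x (by intro b hb; simp [Ne.symm hb])]
    simp
  | succ n ih =>
    calc kerPow Q (n + 2) x y
        = ∑' z : X, ∑' w : X, Q x z * (kerPow Q n z w * Q w y) := by
          show ∑' z : X, Q x z * kerPow Q (n + 1) z y = _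
          simp only [ih, ← ENNReal.tsum_mul_left]
      _ = ∑' w : X, (∑' z : X, Q x z * kerPow Q n z w) * Q w y := by
          rw [ENNReal.tsum_comm]
          simp only [← ENNReal.tsum_mul_right, mul_assoc]
      _ = ∑' w : X, kerPow Q (n + 1) x w * Q w y := rfl

lemma kerPow_transpose (n : ℕ) (x y : X) :
    kerPow (fun a b => Q b a) n x y = kerPow Q n y x := by
  induction n generalizing x y with
  | zero =>
    simp only [kerPow]
    split_ifs <;> simp_all
  | succ n ih =>
    rw [kerPow_succ_right]
    exact tsum_congr fun z => by rw [ih, mul_comm]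

lemma sum_range_succ_kerPow (N : ℕ) (x y : X) :
    ∑ n ∈ Finset.range (N + 1), kerPow Q n x y
      = kerPow Q 0 x y + ∑' z : X, Q x z * ∑ n ∈ Finset.range N, kerPow Q n z y := by
  rw [Finset.sum_range_succ', add_comm]
  simp only [kerPow, Finset.mul_sum]
  rw [Summable.tsum_finsetSum fun _ _ => ENNReal.summable]

lemma sum_range_kerPow_le_sum_range_kerPow_self (hQ : ∀ x, ∑' y : X, Q x y ≤ 1)
    (N : ℕ) (x o : X) :
    ∑ n ∈ Finset.range N, kerPow Q n x o ≤ ∑ n ∈ Finset.range N, kerPow Q n o o := by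
  induction N generalizing x with
  | zero => simp
  | succ N ih =>
    obtain rfl | hx := eq_or_ne x o
    · exact le_rfl
    calc ∑ n ∈ Finset.range (N + 1), kerPow Q n x o
        = ∑' z : X, Q x z * ∑ n ∈ Finset.range N, kerPow Q n z o := by
          rw [sum_range_succ_kerPow, kerPow_zero_of_ne Q hx, zero_add]
      _ ≤ (∑' z : X, Q x z) * ∑ n ∈ Finset.range N, kerPow Q n o o := by
          rw [← ENNReal.tsum_mul_right]
          exact ENNReal.tsum_le_tsum fun z => mul_le_mul_right (ih z) _
      _ ≤ ∑ n ∈ Finset.range (N + 1), kerPow Q n o o := by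
          grw [hQ x, one_mul]
          exact Finset.sum_le_sum_of_subset (Finset.range_subset_range.2 N.le_succ)

lemma tsum_kerPow_le_tsum_kerPow_self (hQ : ∀ x, ∑' y : X, Q x y ≤ 1) (x o : X) :
    ∑' n : ℕ, kerPow Q n x o ≤ ∑' n : ℕ, kerPow Q n o o := by
  rw [ENNReal.tsum_eq_iSup_nat, ENNReal.tsum_eq_iSup_nat]
  exact iSup_mono fun N => sum_range_kerPow_le_sum_range_kerPow_self Q hQ N x o

end KernelPowers

theorem doubly_stochastic_green_sum_le_general
    {X : Type*} (P : X → X → ℝ≥0∞)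
    (hcol : ∀ y : X, ∑' x : X, P x y = 1)
    (o : X) (ho : ∑' n : ℕ, kerPow (fun x y => P y x) n o o ≠ ⊤)
    (f : X → ℝ≥0∞) (hf : ∑' x : X, f x ≠ ⊤) :
    (∑' (n : ℕ) (x : X), kerPow P n o x * f x ≤
      (∑' x : X, f x) * ∑' n : ℕ, kerPow (fun x y => P y x) n o o) ∧
    ∑' (n : ℕ) (x : X), kerPow P n o x * f x ≠ ⊤ := by
  set G := ∑' n : ℕ, kerPow (fun x y => P y x) n o o
  have hbound : ∑' (n : ℕ) (x : X), kerPow P n o x * f x ≤ (∑' x : X, f x) * G :=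
    calc ∑' (n : ℕ) (x : X), kerPow P n o x * f x
        = ∑' x : X, (∑' n : ℕ, kerPow (fun x y => P y x) n x o) * f x := by
          rw [ENNReal.tsum_comm]
          simp only [kerPow_transpose, ENNReal.tsum_mul_right]
      _ ≤ ∑' x : X, G * f x := ENNReal.tsum_le_tsum fun x =>
          mul_le_mul_left (tsum_kerPow_le_tsum_kerPow_self _ (fun y => (hcol y).le) x o) _
      _ = (∑' x : X, f x) * G := by rw [ENNReal.tsum_mul_left, mul_comm]
  exact ⟨hbound, ne_top_of_le_ne_top (ENNReal.mul_ne_top hf ho) hbound⟩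

/-- Comparison bound for a doubly stochastic kernel `P` on a countable set: if the
transposed walk is transient at `o` and `f` is summable, then
`∑' n x, Pⁿ(o, x) · f(x) ≤ (∑' x, f x) · (∑' n, (Pᵀ)ⁿ(o, o))`; in particular the
double sum is finite. -/
theorem doubly_stochastic_green_sum_le
    {X : Type*} [Countable X] (P : X → X → ℝ≥0∞)
    (hrow : ∀ x : X, ∑' y : X, P x y = 1)
    (hcol : ∀ y : X, ∑' x : X, P x y = 1)
    (o : X) (ho : ∑' n : ℕ, kerPow (fun x y => P y x) n o o ≠ ⊤)
    (f : X → ℝ≥0∞) (hf : ∑' x : X, f x ≠ ⊤) :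
    (∑' (n : ℕ) (x : X), kerPow P n o x * f x ≤
      (∑' x : X, f x) * ∑' n : ℕ, kerPow (fun x y => P y x) n o o) ∧
    ∑' (n : ℕ) (x : X), kerPow P n o x * f x ≠ ⊤ :=
  doubly_stochastic_green_sum_le_general P hcol o ho f hf
end
end
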